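/- arXiv:0708.2717 — 3 statements merged into one kernel-verified Lean document; each statement's English description precedes it below -/
import Mathlib

section
/- Let T = ⟨(t_0,x_0,y_0),…,(t_N,x_N,y_N)⟩ be a trajectory and let 𝒫 be a places-of-interest application (PIA). Distinct stops of T with respect to 𝒫 have disjoint index ranges: if (i,j) and (i',j') are stops of T with respect to 𝒫 and the integer intervals [i,j] and [i',j'] have a common element, then (i,j) = (i',j'). -/
/-! Inside one place of interest, a stop is a maximal run of consecutive samples in its geometry, and
two overlapping maximal runs coincide: an earlier start of one would put the sample just before the
other's start inside the run, against maximality, and likewise at the ends. Overlapping stops of a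
PIA belong to the same place, since a common sample lies in both geometries, which are disjoint
otherwise. -/

/-- A *stop* of the trajectory with samples `(t i, x i, y i)` for `i : Fin (N+1)`
(with `t` strictly increasing) with respect to a single place of interest (PoI)
having geometry `R ⊆ ℝ²` and minimum duration `Δ`.  The pair of indices `(i, j)`
must satisfy: (a) all sample points with index in `[i, j]` lie in `R`;
(b) the duration condition `t j - t i > Δ`; and (c) maximality of the run:
the sample point just before index `i` (if any) and just after index `j`
(if any) are not in `R`. -/
def IsStopWith (N : ℕ) (t x y : Fin (N + 1) → ℝ) (R : Set (ℝ × ℝ)) (Δ : ℝ)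
    (i j : Fin (N + 1)) : Prop :=
  i ≤ j ∧
  (∀ k : Fin (N + 1), i ≤ k → k ≤ j → (x k, y k) ∈ R) ∧
  Δ < t j - t i ∧
  (∀ i' : Fin (N + 1), (i' : ℕ) + 1 = (i : ℕ) → (x i', y i') ∉ R) ∧
  (∀ j' : Fin (N + 1), (j : ℕ) + 1 = (j' : ℕ) → (x j', y j') ∉ R)

/-- `(i, j)` is a stop of the trajectory with respect to the
places-of-interest application given by the (finitely many) geometries `R k`
and minimum durations `Δ k`, `k : ι`:  some PoI of the application witnesses
conditions (a), (b) and (c). -/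
def IsStop {ι : Type*} (N : ℕ) (t x y : Fin (N + 1) → ℝ)
    (R : ι → Set (ℝ × ℝ)) (Δ : ι → ℝ) (i j : Fin (N + 1)) : Prop :=
  ∃ k : ι, IsStopWith N t x y (R k) (Δ k) i j

namespace IsStopWith

variable {N : ℕ} {t x y : Fin (N + 1) → ℝ} {R : Set (ℝ × ℝ)} {Δ Δ' : ℝ} {i j i' j' : Fin (N + 1)}

theorem mem (hs : IsStopWith N t x y R Δ i j) {k : Fin (N + 1)} (hik : i ≤ k) (hkj : k ≤ j) :
    (x k, y k) ∈ R :=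
  hs.2.1 k hik hkj

theorem le_start_of_le_end (hs : IsStopWith N t x y R Δ i j) (hs' : IsStopWith N t x y R Δ' i' j')
    (h : i' ≤ j) : i' ≤ i := by
  by_contra! hlt
  rw [Fin.lt_def] at hlt
  rw [Fin.le_def] at h
  exact hs'.2.2.2.1 ⟨i' - 1, by omega⟩ (by simp only; omega)
    (hs.mem (Fin.le_def.mpr (by simp only; omega)) (Fin.le_def.mpr (by simp only; omega)))

theorem end_le_of_start_le (hs : IsStopWith N t x y R Δ i j) (hs' : IsStopWith N t x y R Δ' i' j')
    (h : i ≤ j') : j ≤ j' := by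
  by_contra! hlt
  rw [Fin.lt_def] at hlt
  rw [Fin.le_def] at h
  exact hs'.2.2.2.2 ⟨j' + 1, by omega⟩ rfl
    (hs.mem (Fin.le_def.mpr (by simp only; omega)) (Fin.le_def.mpr (by simp only; omega)))

theorem eq_of_le_of_le (hs : IsStopWith N t x y R Δ i j) (hs' : IsStopWith N t x y R Δ' i' j')
    {m : Fin (N + 1)} (him : i ≤ m) (hmj : m ≤ j) (him' : i' ≤ m) (hmj' : m ≤ j') :
    i = i' ∧ j = j' :=
  ⟨le_antisymm (hs'.le_start_of_le_end hs (him.trans hmj'))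
      (hs.le_start_of_le_end hs' (him'.trans hmj)),
    le_antisymm (hs.end_le_of_start_le hs' (him.trans hmj'))
      (hs'.end_le_of_start_le hs (him'.trans hmj))⟩

end IsStopWith

theorem stops_index_ranges_disjoint_general {ι : Type*} (N : ℕ)
    (t x y : Fin (N + 1) → ℝ)
    (R : ι → Set (ℝ × ℝ)) (Δ : ι → ℝ)
    (hdisj : ∀ k l, k ≠ l → Disjoint (R k) (R l))
    (i j i' j' : Fin (N + 1))
    (h1 : IsStop N t x y R Δ i j) (h2 : IsStop N t x y R Δ i' j')
    (m : Fin (N + 1))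
    (him : i ≤ m) (hmj : m ≤ j) (him' : i' ≤ m) (hmj' : m ≤ j') :
    i = i' ∧ j = j' := by
  obtain ⟨k, hs⟩ := h1
  obtain ⟨k', hs'⟩ := h2
  obtain rfl : k = k' := by
    by_contra hne
    exact (hdisj k k' hne).ne_of_mem (hs.mem him hmj) (hs'.mem him' hmj') rfl
  exact hs.eq_of_le_of_le hs' him hmj him' hmj'

/-- distinct stops have disjoint index ranges: if the integer
intervals `[i, j]` and `[i', j']` of two stops share an element, then the
stops coincide. -/
theorem stops_index_ranges_disjoint {ι : Type*} [Finite ι] (N : ℕ)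
    (t x y : Fin (N + 1) → ℝ) (ht : StrictMono t)
    (R : ι → Set (ℝ × ℝ)) (Δ : ι → ℝ)
    (hΔ : ∀ k, 0 < Δ k)
    (hdisj : ∀ k l, k ≠ l → Disjoint (R k) (R l))
    (i j i' j' : Fin (N + 1))
    (h1 : IsStop N t x y R Δ i j) (h2 : IsStop N t x y R Δ i' j')
    (m : Fin (N + 1))
    (him : i ≤ m) (hmj : m ≤ j) (him' : i' ≤ m) (hmj' : m ≤ j') :
    i = i' ∧ j = j' :=
  stops_index_ranges_disjoint_general N t x y R Δ hdisj i j i' j' h1 h2 m him hmj him' hmj'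
end

section
/- Let T = ⟨(t_0,x_0,y_0),…,(t_N,x_N,y_N)⟩ be a trajectory and let 𝒫 be a places-of-interest application (PIA). The set of stops of T with respect to 𝒫 is finite and has cardinality at most ⌊(N+1)/2⌋. -/
/-- Two stops whose index intervals overlap are equal. -/
lemma stop_eq_of_overlap {ι : Type*} (N : ℕ) (t x y : Fin (N + 1) → ℝ)
    (R : ι → Set (ℝ × ℝ)) (Δ : ι → ℝ)
    (hdisj : ∀ k l, k ≠ l → Disjoint (R k) (R l))
    {i j i' j' : Fin (N + 1)}
    (h1 : IsStop N t x y R Δ i j) (h2 : IsStop N t x y R Δ i' j')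
    {m : Fin (N + 1)} (hm1 : i ≤ m) (hm2 : m ≤ j) (hm3 : i' ≤ m) (hm4 : m ≤ j') :
    i = i' ∧ j = j' := by
  obtain ⟨k, hk1, hk2, hk3, hk4, hk5⟩ := h1
  obtain ⟨l, hl1, hl2, hl3, hl4, hl5⟩ := h2
  have hkl : k = l := by
    by_contra h
    exact Set.disjoint_left.mp (hdisj k l h) (hk2 m hm1 hm2) (hl2 m hm3 hm4)
  subst hkl
  have hii : (i : ℕ) = (i' : ℕ) := by
    rcases lt_trichotomy (i : ℕ) (i' : ℕ) with h | h | h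
    · exfalso
      have hpos : 0 < (i' : ℕ) := by omega
      set p : Fin (N + 1) := ⟨(i' : ℕ) - 1, by omega⟩ with hp
      refine hl4 p (by simp [hp]; omega) (hk2 p ?_ ?_)
      · exact Fin.le_def.mpr (by simp [hp]; omega)
      · exact Fin.le_def.mpr (by simp [hp]; have := Fin.le_def.mp hm3; have := Fin.le_def.mp hm2; omega)
    · exact h
    · exfalso
      have hpos : 0 < (i : ℕ) := by omega
      set p : Fin (N + 1) := ⟨(i : ℕ) - 1, by omega⟩ with hp
      refine hk4 p (by simp [hp]; omega) (hl2 p ?_ ?_)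
      · exact Fin.le_def.mpr (by simp [hp]; omega)
      · exact Fin.le_def.mpr (by simp [hp]; have := Fin.le_def.mp hm1; have := Fin.le_def.mp hm4; omega)
  have hjj : (j : ℕ) = (j' : ℕ) := by
    rcases lt_trichotomy (j : ℕ) (j' : ℕ) with h | h | h
    · exfalso
      have hlt : (j : ℕ) + 1 < N + 1 := by have := j'.isLt; omega
      set p : Fin (N + 1) := ⟨(j : ℕ) + 1, hlt⟩ with hp
      refine hk5 p (by simp [hp]) (hl2 p ?_ ?_)
      · exact Fin.le_def.mpr (by simp [hp]; have := Fin.le_def.mp hm3; have := Fin.le_def.mp hm2; omega)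
      · exact Fin.le_def.mpr (by simp [hp]; omega)
    · exact h
    · exfalso
      have hlt : (j' : ℕ) + 1 < N + 1 := by have := j.isLt; omega
      set p : Fin (N + 1) := ⟨(j' : ℕ) + 1, hlt⟩ with hp
      refine hl5 p (by simp [hp]) (hk2 p ?_ ?_)
      · exact Fin.le_def.mpr (by simp [hp]; have := Fin.le_def.mp hm1; have := Fin.le_def.mp hm4; omega)
      · exact Fin.le_def.mpr (by simp [hp]; omega)
  exact ⟨Fin.ext hii, Fin.ext hjj⟩

/-- the set of stops of a trajectory is finite, of cardinality
at most `⌊(N+1)/2⌋`. -/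
theorem stops_finite_and_card_le {ι : Type*} [Finite ι] (N : ℕ)
    (t x y : Fin (N + 1) → ℝ) (ht : StrictMono t)
    (R : ι → Set (ℝ × ℝ)) (Δ : ι → ℝ)
    (hΔ : ∀ k, 0 < Δ k)
    (hdisj : ∀ k l, k ≠ l → Disjoint (R k) (R l)) :
    {p : Fin (N + 1) × Fin (N + 1) | IsStop N t x y R Δ p.1 p.2}.Finite ∧
    {p : Fin (N + 1) × Fin (N + 1) | IsStop N t x y R Δ p.1 p.2}.ncard ≤
      (N + 1) / 2 := by
  classical
  set S : Finset (Fin (N + 1) × Fin (N + 1)) :=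
    Finset.univ.filter (fun p => IsStop N t x y R Δ p.1 p.2) with hS
  have hset : {p : Fin (N + 1) × Fin (N + 1) | IsStop N t x y R Δ p.1 p.2} = ↑S := by
    ext p; simp [hS]
  rw [hset]
  refine ⟨S.finite_toSet, ?_⟩
  rw [Set.ncard_coe_finset]
  -- each stop interval has at least two elements
  have hlt : ∀ p ∈ S, p.1 < p.2 := by
    intro p hp
    obtain ⟨k, hk1, hk2, hk3, hk4, hk5⟩ := (Finset.mem_filter.mp hp).2
    have : t p.1 < t p.2 := by have := hΔ k; linarith
    exact ht.lt_iff_lt.mp this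
  have hcard2 : ∀ p ∈ S, 2 ≤ (Finset.Icc p.1 p.2).card := by
    intro p hp
    have := hlt p hp
    rw [Fin.card_Icc]
    have := Fin.lt_def.mp this
    omega
  have hdisjI : ∀ p ∈ S, ∀ q ∈ S, p ≠ q →
      Disjoint (Finset.Icc p.1 p.2) (Finset.Icc q.1 q.2) := by
    intro p hp q hq hne
    rw [Finset.disjoint_left]
    intro m hm hm'
    rw [Finset.mem_Icc] at hm hm'
    have := stop_eq_of_overlap N t x y R Δ hdisj
      (Finset.mem_filter.mp hp).2 (Finset.mem_filter.mp hq).2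
      hm.1 hm.2 hm'.1 hm'.2
    exact hne (Prod.ext this.1 this.2)
  have hsum : 2 * S.card ≤ N + 1 := by
    calc 2 * S.card = ∑ _p ∈ S, 2 := by rw [Finset.sum_const, smul_eq_mul, mul_comm]
      _ ≤ ∑ p ∈ S, (Finset.Icc p.1 p.2).card := Finset.sum_le_sum hcard2
      _ = (S.biUnion fun p => Finset.Icc p.1 p.2).card :=
          (Finset.card_biUnion hdisjI).symm
      _ ≤ Fintype.card (Fin (N + 1)) := Finset.card_le_univ _
      _ = N + 1 := Fintype.card_fin _
  omega
end

section
/- Let T = ⟨(t_0,x_0,y_0),…,(t_N,x_N,y_N)⟩ be a trajectory and let 𝒫 be a places-of-interest application (PIA). The stop intervals of T with respect to 𝒫 are totally ordered by strict precedence: for any two distinct stops (i,j) and (i',j') of T with respect to 𝒫, either their stop intervals satisfy [t_i,t_j] ⋖ [t_{i'},t_{j'}] (i.e., t_i < t_j < t_{i'} < t_{j'}) or [t_{i'},t_{j'}] ⋖ [t_i,t_j] (i.e., t_{i'} < t_{j'} < t_i < t_j). -/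
/-- the stop intervals of a trajectory are totally ordered by
strict precedence: for distinct stops `(i, j)` and `(i', j')`, either
`t i < t j < t i' < t j'` or `t i' < t j' < t i < t j`. -/
theorem stop_intervals_strictly_ordered {ι : Type*} [Finite ι] (N : ℕ)
    (t x y : Fin (N + 1) → ℝ) (ht : StrictMono t)
    (R : ι → Set (ℝ × ℝ)) (Δ : ι → ℝ)
    (hΔ : ∀ k, 0 < Δ k)
    (hdisj : ∀ k l, k ≠ l → Disjoint (R k) (R l))
    (i j i' j' : Fin (N + 1))
    (h1 : IsStop N t x y R Δ i j) (h2 : IsStop N t x y R Δ i' j')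
    (hne : (i, j) ≠ (i', j')) :
    (t i < t j ∧ t j < t i' ∧ t i' < t j') ∨
    (t i' < t j' ∧ t j' < t i ∧ t i < t j) := by
  obtain ⟨k, hk1, hk2, hk3, hk4, hk5⟩ := h1
  obtain ⟨l, hl1, hl2, hl3, hl4, hl5⟩ := h2
  have hij : t i < t j := by linarith [hΔ k]
  have hij' : t i' < t j' := by linarith [hΔ l]
  rcases lt_or_ge j i' with h | h
  · exact Or.inl ⟨hij, ht h, hij'⟩
  rcases lt_or_ge j' i with h' | h'
  · exact Or.inr ⟨hij', ht h', hij⟩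
  exfalso
  set m := max i i' with hm
  have hm1 : m ≤ j := max_le hk1 h
  have hm2 : m ≤ j' := max_le h' hl1
  have hmk : (x m, y m) ∈ R k := hk2 m (le_max_left _ _) hm1
  have hml : (x m, y m) ∈ R l := hl2 m (le_max_right _ _) hm2
  have hkl : k = l := by
    by_contra hne'
    exact (hdisj k l hne').ne_of_mem hmk hml rfl
  subst hkl
  have hii : i = i' := by
    rcases lt_trichotomy i i' with hlt | heq | hgt
    · exfalso
      have hv : (i : ℕ) < (i' : ℕ) := hlt
      have hp : (i' : ℕ) - 1 < N + 1 := by omega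
      have hnot : (x ⟨(i' : ℕ) - 1, hp⟩, y ⟨(i' : ℕ) - 1, hp⟩) ∉ R k :=
        hl4 ⟨(i' : ℕ) - 1, hp⟩ (by simp; omega)
      have h1le : i ≤ (⟨(i' : ℕ) - 1, hp⟩ : Fin (N + 1)) := by
        rw [Fin.le_def]; simp; omega
      have h2le : (⟨(i' : ℕ) - 1, hp⟩ : Fin (N + 1)) ≤ j := by
        have hij2 : (i' : ℕ) ≤ (j : ℕ) := h
        rw [Fin.le_def]; simp; omega
      exact hnot (hk2 _ h1le h2le)
    · exact heq
    · exfalso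
      have hv : (i' : ℕ) < (i : ℕ) := hgt
      have hp : (i : ℕ) - 1 < N + 1 := by omega
      have hnot : (x ⟨(i : ℕ) - 1, hp⟩, y ⟨(i : ℕ) - 1, hp⟩) ∉ R k :=
        hk4 ⟨(i : ℕ) - 1, hp⟩ (by simp; omega)
      have h1le : i' ≤ (⟨(i : ℕ) - 1, hp⟩ : Fin (N + 1)) := by
        rw [Fin.le_def]; simp; omega
      have h2le : (⟨(i : ℕ) - 1, hp⟩ : Fin (N + 1)) ≤ j' := by
        have hij2 : (i : ℕ) ≤ (j' : ℕ) := h'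
        rw [Fin.le_def]; simp; omega
      exact hnot (hl2 _ h1le h2le)
  have hjj : j = j' := by
    rcases lt_trichotomy j j' with hlt | heq | hgt
    · exfalso
      have hv : (j : ℕ) < (j' : ℕ) := hlt
      have hq : (j : ℕ) + 1 < N + 1 := by have := j'.isLt; omega
      have hnot : (x ⟨(j : ℕ) + 1, hq⟩, y ⟨(j : ℕ) + 1, hq⟩) ∉ R k :=
        hk5 ⟨(j : ℕ) + 1, hq⟩ rfl
      have h1le : i' ≤ (⟨(j : ℕ) + 1, hq⟩ : Fin (N + 1)) := by
        have hij2 : (i' : ℕ) ≤ (j : ℕ) := h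
        rw [Fin.le_def]; simp; omega
      have h2le : (⟨(j : ℕ) + 1, hq⟩ : Fin (N + 1)) ≤ j' := by
        rw [Fin.le_def]; simp; omega
      exact hnot (hl2 _ h1le h2le)
    · exact heq
    · exfalso
      have hv : (j' : ℕ) < (j : ℕ) := hgt
      have hq : (j' : ℕ) + 1 < N + 1 := by have := j.isLt; omega
      have hnot : (x ⟨(j' : ℕ) + 1, hq⟩, y ⟨(j' : ℕ) + 1, hq⟩) ∉ R k :=
        hl5 ⟨(j' : ℕ) + 1, hq⟩ rfl
      have h1le : i ≤ (⟨(j' : ℕ) + 1, hq⟩ : Fin (N + 1)) := by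
        have hij2 : (i : ℕ) ≤ (j' : ℕ) := h'
        rw [Fin.le_def]; simp; omega
      have h2le : (⟨(j' : ℕ) + 1, hq⟩ : Fin (N + 1)) ≤ j := by
        rw [Fin.le_def]; simp; omega
      exact hnot (hk2 _ h1le h2le)
  exact hne (by rw [hii, hjj])
end
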